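/- Let G be a simple graph on a vertex type V and let v₁, v₂ ∈ V with G.Adj v₁ v₂. Define the simple graph G′ on Option V by: some u and some v are adjacent in G′ iff u and v are adjacent in G and {u,v} ≠ {v₁,v₂}, and none is adjacent to some u iff u = v₁ or u = v₂. Then the minimum length of a cycle in G′ passing through the vertex none equals (the minimum length of a cycle in G containing the edge {v₁,v₂}) + 1, where both minima are infima in ℕ∞ (taking value ∞ if no such cycle exists), 'minimum length of a cycle in H passing through a vertex w' means the infimum in ℕ∞ of the set of lengths of cycles of H that visit w, 'minimum length of a cycle in G containing the edge e' means the infimum in ℕ∞ of the set of lengths of cycles of G whose edge set contains e, and ∞ + 1 = ∞. -/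

import Mathlib

/-!
A cycle of `G` through the edge `s(v₁, v₂)` and a cycle of the subdivision through the new vertex
`none` both amount to a path from `v₂` to `v₁` in `G` minus that edge: the first closes the path
with the edge itself (one more edge), the second through `none` (two more edges). Hence the two
infima differ by exactly one.
-/

/-- The minimum length of a cycle of `G` whose edge set contains `e`,
as an infimum in `ℕ∞` (so `⊤` if no such cycle exists). -/
noncomputable def minCycleLengthThroughEdge {V : Type*} (G : SimpleGraph V)
    (e : Sym2 V) : ℕ∞ :=
  ⨅ (a : V) (w : G.Walk a a) (_ : w.IsCycle ∧ e ∈ w.edges), (w.length : ℕ∞)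

/-- The minimum length of a cycle of `G` whose support contains the vertex
`v`, as an infimum in `ℕ∞` (so `⊤` if no such cycle exists). -/
noncomputable def minCycleLengthThroughVertex {V : Type*} (G : SimpleGraph V)
    (v : V) : ℕ∞ :=
  ⨅ (a : V) (w : G.Walk a a) (_ : w.IsCycle ∧ v ∈ w.support), (w.length : ℕ∞)

/-- `G` with the edge `{v₁, v₂}` subdivided: the edge is deleted and a new
vertex (`none`) is joined to `v₁` and `v₂`. -/
def subdivideEdge {V : Type*} (G : SimpleGraph V) (v₁ v₂ : V) :
    SimpleGraph (Option V) :=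
  SimpleGraph.fromRel (fun a b =>
    match a, b with
    | some u, some v => G.Adj u v ∧ s(u, v) ≠ s(v₁, v₂)
    | none, some u => u = v₁ ∨ u = v₂
    | _, _ => False)

namespace SimpleGraph.Walk

variable {W : Type*} {H : SimpleGraph W} {a b x : W}

theorem IsCycle.exists_eq_cons_concat {c : H.Walk x x} (hc : c.IsCycle) :
    ∃ (a b : W) (ha : H.Adj x a) (hb : H.Adj b x) (p : H.Walk a b),
      c = cons ha (p.concat hb) := by
  cases c with
  | nil => exact (not_isCycle_nil hc).elim
  | cons ha q =>
    exact ⟨_, _, ha, adj_penultimate (not_nil_of_isCycle_cons hc), q.dropLast,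
      by rw [concat_dropLast]⟩

theorem cons_concat_isCycle_iff (ha : H.Adj x a) (hb : H.Adj b x) (p : H.Walk a b) :
    (cons ha (p.concat hb)).IsCycle ↔ p.IsPath ∧ x ∉ p.support ∧ a ≠ b := by
  rw [cons_isCycle_iff, concat_isPath_iff, edges_concat, List.concat_eq_append,
    List.mem_append, List.mem_singleton]
  constructor
  · rintro ⟨⟨hp, hx⟩, he⟩
    exact ⟨hp, hx, fun hab => he (Or.inr (by rw [hab, Sym2.eq_swap]))⟩
  · rintro ⟨hp, hx, hab⟩
    refine ⟨⟨hp, hx⟩, ?_⟩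
    rintro (he | he)
    · exact hx (p.fst_mem_support_of_mem_edges he)
    · rw [Sym2.eq_iff] at he
      grind [end_mem_support]

theorem IsCycle.snd_eq_or_penultimate_eq {c : H.Walk a a} (hc : c.IsCycle)
    (he : s(a, b) ∈ c.edges) : c.snd = b ∨ c.penultimate = b := by
  cases c with
  | nil => exact (not_isCycle_nil hc).elim
  | cons hy p =>
    rw [snd_cons, penultimate_cons_of_not_nil _ _ (not_nil_of_isCycle_cons hc)]
    rw [cons_isCycle_iff] at hc
    rw [edges_cons, List.mem_cons, Sym2.congr_right] at he
    exact (he.imp_left Eq.symm).imp_right fun he => (hc.1.eq_penultimate_of_mem_edges he).symm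

theorem IsCycle.exists_isPath_deleteEdges_of_snd_eq {c : H.Walk a a} (hc : c.IsCycle)
    (hb : c.snd = b) :
    ∃ q : (H.deleteEdges {s(a, b)}).Walk b a, q.IsPath ∧ q.length + 1 = c.length := by
  cases c with
  | nil => exact (not_isCycle_nil hc).elim
  | @cons _ y _ hy p =>
    rw [snd_cons] at hb
    subst hb
    rw [cons_isCycle_iff] at hc
    have hp : ∀ e ∈ p.edges, e ∉ ({s(a, y)} : Set (Sym2 W)) := by
      rintro e he rfl
      exact hc.2 he
    exact ⟨p.toDeleteEdges _ hp, IsPath.toDeleteEdges _ _ hc.1 hp, by simp⟩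

theorem IsCycle.exists_isPath_deleteEdges {u : W} {c : H.Walk u u} (hc : c.IsCycle)
    (he : s(a, b) ∈ c.edges) :
    ∃ q : (H.deleteEdges {s(a, b)}).Walk b a, q.IsPath ∧ q.length + 1 = c.length := by
  classical
  have ha := c.fst_mem_support_of_mem_edges he
  have hd : (c.rotate a ha).IsCycle := hc.rotate ha
  -- Based at `a`, the cycle has `s(a, b)` as first or last edge; reversal makes it the first.
  rcases hd.snd_eq_or_penultimate_eq ((c.rotate_edges a ha).mem_iff.mpr he) with hb | hb
  · simpa using hd.exists_isPath_deleteEdges_of_snd_eq hb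
  · simpa using hd.reverse.exists_isPath_deleteEdges_of_snd_eq (by rwa [snd_reverse])

theorem IsPath.exists_isCycle_mem_edges (h : H.Adj a b)
    {q : (H.deleteEdges {s(a, b)}).Walk b a} (hq : q.IsPath) :
    ∃ c : H.Walk a a, c.IsCycle ∧ s(a, b) ∈ c.edges ∧ c.length = q.length + 1 := by
  refine ⟨cons h (q.mapLe (deleteEdges_le _)), ?_, by simp, by simp⟩
  rw [cons_isCycle_iff, edges_mapLe_eq_edges]
  exact ⟨hq.mapLe _, fun he => by simpa using q.edges_subset_edgeSet he⟩

end SimpleGraph.Walk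

namespace subdivideEdge

open SimpleGraph Walk

variable {V : Type*} {G : SimpleGraph V} {v₁ v₂ : V}

theorem adj_some_some {u w : V} :
    (subdivideEdge G v₁ v₂).Adj (some u) (some w) ↔ (G.deleteEdges {s(v₁, v₂)}).Adj u w := by
  simp only [subdivideEdge, fromRel_adj, deleteEdges_adj, Set.mem_singleton_iff, ne_eq,
    Option.some.injEq]
  grind [Sym2.eq_swap, Adj.ne, Adj.symm]

theorem adj_none {x : Option V} :
    (subdivideEdge G v₁ v₂).Adj none x ↔ x = some v₁ ∨ x = some v₂ := by
  cases x <;> simp [subdivideEdge]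

variable (G v₁ v₂) in
def someHom : G.deleteEdges {s(v₁, v₂)} →g subdivideEdge G v₁ v₂ where
  toFun := some
  map_rel' := adj_some_some.mpr

theorem exists_support_eq_map_some {x y : Option V} (r : (subdivideEdge G v₁ v₂).Walk x y)
    (hr : none ∉ r.support) {u w : V} (hu : x = some u) (hw : y = some w) :
    ∃ q : (G.deleteEdges {s(v₁, v₂)}).Walk u w, r.support = q.support.map some := by
  induction r generalizing u with
  | nil =>
    subst hu
    cases Option.some_injective _ hw
    exact ⟨nil, rfl⟩
  | @cons _ z _ h r ih =>
    subst hu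
    rw [support_cons, List.mem_cons, not_or] at hr
    obtain ⟨z, rfl⟩ :=
      Option.ne_none_iff_exists'.mp fun hz => hr.2 (hz ▸ r.start_mem_support)
    obtain ⟨q, hq⟩ := ih hr.2 rfl hw
    exact ⟨cons (adj_some_some.mp h) q, by simp [hq]⟩

theorem exists_isPath_deleteEdges_of_isCycle {x : Option V}
    {c : (subdivideEdge G v₁ v₂).Walk x x} (hc : c.IsCycle) (hn : none ∈ c.support) :
    ∃ q : (G.deleteEdges {s(v₁, v₂)}).Walk v₂ v₁, q.IsPath ∧ q.length + 2 = c.length := by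
  classical
  obtain ⟨a, b, ha, hb, p, hp⟩ := (hc.rotate hn).exists_eq_cons_concat
  have hlen : p.length + 2 = c.length := by
    rw [← length_rotate c none hn, hp, length_cons, length_concat]
  obtain ⟨hpath, hnone, hab⟩ := (cons_concat_isCycle_iff ha hb p).mp (hp ▸ hc.rotate hn)
  -- The two neighbours of `none` on the cycle are `some v₁` and `some v₂`, in some order.
  obtain ⟨r, hr, hrnone, hrlen⟩ : ∃ r : (subdivideEdge G v₁ v₂).Walk (some v₂) (some v₁),
      r.IsPath ∧ none ∉ r.support ∧ r.length = p.length := by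
    rcases adj_none.mp ha with rfl | rfl <;> rcases adj_none.mp hb.symm with rfl | rfl
    all_goals first
      | exact absurd rfl hab
      | exact ⟨p, hpath, hnone, rfl⟩
      | exact ⟨p.reverse, hpath.reverse, by simpa using hnone, length_reverse p⟩
  obtain ⟨q, hq⟩ := exists_support_eq_map_some r hrnone rfl rfl
  refine ⟨q, IsPath.mk' (List.Nodup.of_map some (hq ▸ hr.support_nodup)), ?_⟩
  have := congrArg List.length hq
  simp only [length_support, List.length_map] at this
  omega

theorem exists_isCycle_of_isPath_deleteEdges (hne : v₁ ≠ v₂)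
    {q : (G.deleteEdges {s(v₁, v₂)}).Walk v₂ v₁} (hq : q.IsPath) :
    ∃ c : (subdivideEdge G v₁ v₂).Walk none none, c.IsCycle ∧ c.length = q.length + 2 := by
  obtain ⟨r, hr, hrnone, hrlen⟩ : ∃ r : (subdivideEdge G v₁ v₂).Walk (some v₂) (some v₁),
      r.IsPath ∧ none ∉ r.support ∧ r.length = q.length :=
    ⟨q.map (someHom G v₁ v₂), hq.map (Option.some_injective V), by simp [someHom],
      length_map ..⟩
  have ha : (subdivideEdge G v₁ v₂).Adj none (some v₂) := adj_none.mpr (Or.inr rfl)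
  have hb : (subdivideEdge G v₁ v₂).Adj (some v₁) none := (adj_none.mpr (Or.inl rfl)).symm
  refine ⟨cons ha (r.concat hb), ?_, by simp [hrlen]⟩
  exact (cons_concat_isCycle_iff ha hb r).mpr ⟨hr, hrnone, by simpa using hne.symm⟩

end subdivideEdge

theorem stmt_15 {V : Type*} (G : SimpleGraph V) (v₁ v₂ : V)
    (h : G.Adj v₁ v₂) :
    minCycleLengthThroughVertex (subdivideEdge G v₁ v₂) none
      = minCycleLengthThroughEdge G s(v₁, v₂) + 1 := by
  rw [minCycleLengthThroughVertex, minCycleLengthThroughEdge]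
  simp only [ENat.iInf_add]
  refine le_antisymm (le_iInf₂ fun _ c => le_iInf fun ⟨hc, he⟩ => ?_)
    (le_iInf₂ fun _ c => le_iInf fun ⟨hc, hn⟩ => ?_)
  · obtain ⟨q, hq, hlen⟩ := hc.exists_isPath_deleteEdges he
    obtain ⟨c', hc', hlen'⟩ := subdivideEdge.exists_isCycle_of_isPath_deleteEdges h.ne hq
    refine iInf₂_le_of_le none c' (iInf_le_of_le ⟨hc', c'.start_mem_support⟩ ?_)
    exact_mod_cast (by omega : c'.length ≤ c.length + 1)
  · obtain ⟨q, hq, hlen⟩ := subdivideEdge.exists_isPath_deleteEdges_of_isCycle hc hn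
    obtain ⟨c', hc', he', hlen'⟩ := hq.exists_isCycle_mem_edges h
    refine iInf₂_le_of_le v₁ c' (iInf_le_of_le ⟨hc', he'⟩ ?_)
    exact_mod_cast (by omega : c'.length + 1 ≤ c.length)
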